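/- arXiv:math/0406624 — 9 statements merged into one kernel-verified Lean document; each statement's English description precedes it below -/
import Mathlib

section
/- Let X be a topological space and let σ₁, σ₂ : X → X be commuting local homeomorphisms. For n ∈ ℕ² let R_n = {(x,y) ∈ X × X : σⁿ(x) = σⁿ(y)}, equipped with the subspace topology from X × X. Then the diagonal Δ = {(x,x) : x ∈ X} is an open subset of R_n. -/
theorem IsLocalHomeomorph.iterate {X : Type*} [TopologicalSpace X] {f : X → X}
    (hf : IsLocalHomeomorph f) : ∀ k : ℕ, IsLocalHomeomorph f^[k]
  | 0 => (Homeomorph.refl X).isLocalHomeomorph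
  | k + 1 => by rw [Function.iterate_succ]; exact (hf.iterate k).comp hf

theorem diagonal_open_in_Rn_general {X : Type*} [TopologicalSpace X] (σ₁ σ₂ : X → X)
    (h₁ : IsLocalHomeomorph σ₁) (h₂ : IsLocalHomeomorph σ₂)
    (n : ℕ × ℕ) :
    IsOpen {p : {q : X × X // σ₁^[n.1] (σ₂^[n.2] q.1) = σ₁^[n.1] (σ₂^[n.2] q.2)} |
      p.val.1 = p.val.2} :=
  -- `R_n` is definitionally `Function.Pullback σⁿ σⁿ` and `Δ` its `pullbackDiagonal`.
  isLocallyInjective_iff_isOpen_diagonal.mp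
    ((h₁.iterate n.1).comp (h₂.iterate n.2)).isLocallyInjective

/-- If `σ₁, σ₂ : X → X` are commuting local homeomorphisms and
`R_n = {(x,y) | σⁿ x = σⁿ y}` carries the subspace topology from `X × X`,
then the diagonal is open in `R_n`. -/
theorem diagonal_open_in_Rn {X : Type*} [TopologicalSpace X] (σ₁ σ₂ : X → X)
    (h₁ : IsLocalHomeomorph σ₁) (h₂ : IsLocalHomeomorph σ₂)
    (hcomm : σ₁ ∘ σ₂ = σ₂ ∘ σ₁) (n : ℕ × ℕ) :
    IsOpen {p : {q : X × X // σ₁^[n.1] (σ₂^[n.2] q.1) = σ₁^[n.1] (σ₂^[n.2] q.2)} |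
      p.val.1 = p.val.2} :=
  diagonal_open_in_Rn_general σ₁ σ₂ h₁ h₂ n
end

section
/- Let X be a topological space and let σ₁, σ₂ : X → X be commuting local homeomorphisms. For n ∈ ℕ² let R_n = {(x,y) ∈ X × X : σⁿ(x) = σⁿ(y)}. Then for all n, m ∈ ℕ² with n ≤ m (coordinatewise), R_n is an open subset of R_m when R_m carries the subspace topology from X × X. -/
private lemma iterate_isLocalHomeomorph {X : Type*} [TopologicalSpace X] {σ : X → X}
    (h : IsLocalHomeomorph σ) : ∀ k, IsLocalHomeomorph σ^[k] := by
  intro k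
  induction k with
  | zero => simpa using (Homeomorph.refl X).isLocalHomeomorph
  | succ k ih =>
    rw [Function.iterate_succ]
    exact ih.comp h

/-- If `σ₁, σ₂ : X → X` are commuting local homeomorphisms and `n ≤ m` in `ℕ²`,
then `R_n = {(x,y) | σⁿ x = σⁿ y}` is an open subset of `R_m` in the subspace
topology induced from `X × X`. -/
theorem Rn_open_in_Rm {X : Type*} [TopologicalSpace X] (σ₁ σ₂ : X → X)
    (h₁ : IsLocalHomeomorph σ₁) (h₂ : IsLocalHomeomorph σ₂)
    (hcomm : σ₁ ∘ σ₂ = σ₂ ∘ σ₁) (n m : ℕ × ℕ) (hn₁ : n.1 ≤ m.1) (hn₂ : n.2 ≤ m.2) :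
    IsOpen {p : {q : X × X // σ₁^[m.1] (σ₂^[m.2] q.1) = σ₁^[m.1] (σ₂^[m.2] q.2)} |
      σ₁^[n.1] (σ₂^[n.2] p.val.1) = σ₁^[n.1] (σ₂^[n.2] p.val.2)} := by
  have hc : Function.Commute σ₁ σ₂ := funext_iff.mp hcomm
  set a := m.1 - n.1 with ha
  set b := m.2 - n.2 with hb
  set τ : X → X := σ₁^[a] ∘ σ₂^[b] with hτ
  have hτloc : IsLocalHomeomorph τ :=
    (iterate_isLocalHomeomorph h₁ a).comp (iterate_isLocalHomeomorph h₂ b)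
  have hkey : ∀ x : X, σ₁^[m.1] (σ₂^[m.2] x) = τ (σ₁^[n.1] (σ₂^[n.2] x)) := by
    intro x
    have hm1 : m.1 = a + n.1 := by omega
    have hm2 : m.2 = b + n.2 := by omega
    calc σ₁^[m.1] (σ₂^[m.2] x)
        = σ₁^[a] (σ₁^[n.1] (σ₂^[b] (σ₂^[n.2] x))) := by
          rw [hm1, hm2, Function.iterate_add_apply, Function.iterate_add_apply]
      _ = σ₁^[a] (σ₂^[b] (σ₁^[n.1] (σ₂^[n.2] x))) := by
          rw [((hc.iterate_left n.1).iterate_right b).symm (σ₂^[n.2] x)]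
      _ = τ (σ₁^[n.1] (σ₂^[n.2] x)) := rfl
  have hcontn : Continuous fun x : X => σ₁^[n.1] (σ₂^[n.2] x) :=
    ((iterate_isLocalHomeomorph h₁ n.1).continuous).comp
      ((iterate_isLocalHomeomorph h₂ n.2).continuous)
  rw [isOpen_iff_forall_mem_open]
  rintro ⟨⟨x, y⟩, hxy⟩ hp
  simp only [Set.mem_setOf_eq] at hp
  obtain ⟨e, hz, hfe⟩ := hτloc (σ₁^[n.1] (σ₂^[n.2] x))
  refine ⟨{q | σ₁^[n.1] (σ₂^[n.2] q.val.1) ∈ e.source ∧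
      σ₁^[n.1] (σ₂^[n.2] q.val.2) ∈ e.source}, ?_, ?_, ?_⟩
  · rintro ⟨⟨u, v⟩, huv⟩ ⟨hu, hv⟩
    simp only [Set.mem_setOf_eq] at *
    have : τ (σ₁^[n.1] (σ₂^[n.2] u)) = τ (σ₁^[n.1] (σ₂^[n.2] v)) := by
      rw [← hkey, ← hkey]; exact huv
    rw [hfe] at this
    exact e.injOn hu hv this
  · exact (e.open_source.preimage (hcontn.comp
        (continuous_fst.comp continuous_subtype_val))).inter
      (e.open_source.preimage (hcontn.comp (continuous_snd.comp continuous_subtype_val)))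
  · exact ⟨hz, hp ▸ hz⟩
end

section
/- Let X be a compact Hausdorff topological space and let σ : X → X be a surjective local homeomorphism. Then for every continuous function f : X → ℂ, the function L f : X → ℂ defined by (L f)(x) = Σ_{y ∈ σ⁻¹({x})} f(y) (a finite sum, since fibers of σ are finite) is continuous. -/
open scoped BigOperators

/-- For a surjective local homeomorphism `σ` of a compact Hausdorff space `X`
(which has finite fibers), the transfer operator
`(L f)(x) = Σ_{y ∈ σ⁻¹(x)} f(y)` maps continuous functions to continuous
functions. -/
theorem transfer_operator_continuous {X : Type*} [TopologicalSpace X]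
    [CompactSpace X] [T2Space X] (σ : X → X) (hσ : IsLocalHomeomorph σ)
    (hsurj : Function.Surjective σ) (f : X → ℂ) (hf : Continuous f) :
    Continuous fun x : X => ∑ᶠ y ∈ σ ⁻¹' {x}, f y := by
  rw [continuous_iff_continuousAt]
  intro x₀
  classical
  choose e hmem heq using hσ
  -- the fiber over x₀ is finite
  have hcont : Continuous σ := by
    rw [continuous_iff_continuousAt]
    intro x
    rw [heq x]
    exact (e x).continuousAt (hmem x)
  have hFc : IsCompact (σ ⁻¹' {x₀}) :=
    (isClosed_singleton.preimage hcont).isCompact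
  have hsub : ∀ y, (σ ⁻¹' {x₀} ∩ (e y).source).Subsingleton := by
    intro y a ha b hb
    have hinj : Set.InjOn σ (e y).source := by rw [heq y]; exact (e y).injOn
    have : σ a = σ b := by
      have ha' : σ a = x₀ := ha.1
      have hb' : σ b = x₀ := hb.1
      rw [ha', hb']
    exact hinj ha.2 hb.2 this
  have hF : (σ ⁻¹' {x₀}).Finite := by
    obtain ⟨t, ht⟩ := hFc.elim_finite_subcover (fun y : X => (e y).source)
      (fun y => (e y).open_source) (fun z _ => Set.mem_iUnion.2 ⟨z, hmem z⟩)
    have : σ ⁻¹' {x₀} ⊆ ⋃ y ∈ t, σ ⁻¹' {x₀} ∩ (e y).source := by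
      intro z hz
      obtain ⟨y, hy, hzy⟩ := Set.mem_iUnion₂.1 (ht hz)
      exact Set.mem_iUnion₂.2 ⟨y, hy, hz, hzy⟩
    exact Set.Finite.subset (Set.Finite.biUnion t.finite_toSet fun y _ => (hsub y).finite) this
  -- separate the fiber points by disjoint open sets
  obtain ⟨W, hW, hWd⟩ := hF.t2_separation
  -- open neighborhoods around each fiber point on which σ is injective
  set U : X → Set X := fun y => (e y).source ∩ W y with hU
  have hUopen : ∀ y, IsOpen (U y) := fun y => (e y).open_source.inter (hW y).2
  have hymem : ∀ y, y ∈ U y := fun y => ⟨hmem y, (hW y).1⟩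
  -- σ is an open map
  have hopen : IsOpenMap σ := by
    apply IsOpenMap.of_nhds_le
    intro x
    rw [heq x]
    exact ((e x).map_nhds_eq (hmem x)).ge
  -- the "bad" compact set and the good neighborhood V of x₀
  set K : Set X := Set.univ \ ⋃ y ∈ σ ⁻¹' {x₀}, U y with hK
  have hKc : IsCompact K := by
    apply IsClosed.isCompact
    exact isClosed_univ.sdiff (isOpen_biUnion fun y _ => hUopen y)
  have hKclosed : IsClosed (σ '' K) := (hKc.image hcont).isClosed
  set V : Set X := (σ '' K)ᶜ ∩ ⋂ y ∈ σ ⁻¹' {x₀}, σ '' U y with hV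
  have hVopen : IsOpen V :=
    hKclosed.isOpen_compl.inter
      (Set.Finite.isOpen_biInter hF fun y _ => hopen _ (hUopen y))
  have hx₀V : x₀ ∈ V := by
    constructor
    · rintro ⟨z, hzK, hzx⟩
      exact hzK.2 (Set.mem_biUnion hzx (hymem z))
    · exact Set.mem_biInter fun y hy => ⟨y, hymem y, hy⟩
  -- on V, the fiber over x is the image of the fiber over x₀ under the local sections
  have hfiber : ∀ x ∈ V, σ ⁻¹' {x} = (fun y => (e y).symm x) '' (σ ⁻¹' {x₀}) := by
    intro x hx
    ext z
    constructor
    · intro hz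
      have hzK : z ∉ K := fun hzK => hx.1 ⟨z, hzK, hz⟩
      have : z ∈ ⋃ y ∈ σ ⁻¹' {x₀}, U y := by
        by_contra h
        exact hzK ⟨Set.mem_univ z, h⟩
      obtain ⟨y, hy, hzy⟩ := Set.mem_iUnion₂.1 this
      refine ⟨y, hy, ?_⟩
      have h1 : (e y) z = x := by rw [← heq y]; exact hz
      show (e y).symm x = z
      rw [← h1, (e y).left_inv hzy.1]
    · rintro ⟨y, hy, rfl⟩
      have hxy : x ∈ σ '' U y := (Set.mem_iInter₂.1 hx.2) y hy
      obtain ⟨w, hw, hwx⟩ := hxy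
      have hwe : (e y) w = x := by rw [← heq y]; exact hwx
      have h2 : (e y).symm x = w := by rw [← hwe, (e y).left_inv hw.1]
      show (e y).symm x ∈ σ ⁻¹' {x}
      rw [h2]
      exact hwx
  -- the section points land back in U y
  have hsec : ∀ x ∈ V, ∀ y ∈ σ ⁻¹' {x₀}, (e y).symm x ∈ U y := by
    intro x hx y hy
    have hxy : x ∈ σ '' U y := (Set.mem_iInter₂.1 hx.2) y hy
    obtain ⟨w, hw, hwx⟩ := hxy
    have hwe : (e y) w = x := by rw [← heq y]; exact hwx
    have : (e y).symm x = w := by rw [← hwe, (e y).left_inv hw.1]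
    rw [this]; exact hw
  -- injectivity of the sections on the fiber
  have hinjsec : ∀ x ∈ V, Set.InjOn (fun y => (e y).symm x) (σ ⁻¹' {x₀}) := by
    intro x hx a ha b hb hab
    replace hab : (e a).symm x = (e b).symm x := hab
    by_contra hne
    have h1 : (e a).symm x ∈ W a := (hsec x hx a ha).2
    have h2 : (e b).symm x ∈ W b := (hsec x hx b hb).2
    have := hWd ha hb hne
    exact Set.disjoint_left.1 this h1 (hab ▸ h2)
  -- the sum formula on V
  have hformula : ∀ x ∈ V,
      (∑ᶠ y ∈ σ ⁻¹' {x}, f y) = ∑ y ∈ hF.toFinset, f ((e y).symm x) := by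
    intro x hx
    rw [hfiber x hx, finsum_mem_image (hinjsec x hx),
      finsum_mem_eq_finite_toFinset_sum _ hF]
  -- continuity at x₀
  have hgcont : ContinuousAt (fun x => ∑ y ∈ hF.toFinset, f ((e y).symm x)) x₀ := by
    apply tendsto_finset_sum
    intro y hy
    have hy' : y ∈ σ ⁻¹' {x₀} := hF.mem_toFinset.1 hy
    have hx₀t : x₀ ∈ (e y).target := by
      have : (e y) y = x₀ := by rw [← heq y]; exact hy'
      rw [← this]
      exact (e y).map_source (hmem y)
    exact hf.continuousAt.comp ((e y).continuousAt_symm hx₀t)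
  refine hgcont.congr ?_
  filter_upwards [hVopen.mem_nhds hx₀V] with x hx
  exact (hformula x hx).symm
end

section
/- Let X be a compact Hausdorff topological space and let σ : X → X be a surjective local homeomorphism. For x ∈ X set ν(x) = card(σ⁻¹({σ(x)})) (a finite positive integer), and for continuous f : X → ℂ define (P f)(x) = (1/ν(x)) · Σ_{y : σ(y) = σ(x)} f(y). Then: (i) P f is continuous for every continuous f; (ii) P ∘ P = P; (iii) P((g ∘ σ) · f) = (g ∘ σ) · P(f) and P(f · (g ∘ σ)) = P(f) · (g ∘ σ) for all continuous f, g : X → ℂ; (iv) for every continuous f there exists a continuous g : X → ℂ with P f = g ∘ σ. In other words, P is a conditional expectation from C(X) onto the range of the endomorphism α(g) = g ∘ σ. -/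
open scoped BigOperators

/-- The conditional expectation associated to `σ : X → X`:
`(P f)(x) = (1/ν(x)) Σ_{σ y = σ x} f(y)`, where `ν(x)` is the (finite)
cardinality of the fiber `σ⁻¹({σ x})`. -/
noncomputable def condExp {X : Type*} (σ : X → X) (f : X → ℂ) (x : X) : ℂ :=
  ((σ ⁻¹' {σ x}).ncard : ℂ)⁻¹ * ∑ᶠ y ∈ σ ⁻¹' {σ x}, f y

section Aux

variable {X : Type*} [TopologicalSpace X] [CompactSpace X] [T2Space X]

lemma fiber_finite_aux {σ : X → X} (hσ : IsLocalHomeomorph σ) (z : X) :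
    (σ ⁻¹' {z}).Finite := by
  have hK : IsCompact (σ ⁻¹' {z}) :=
    (isClosed_singleton.preimage hσ.continuous).isCompact
  have h : ∀ y ∈ σ ⁻¹' {z}, ∃ U : Set X, IsOpen U ∧ y ∈ U ∧ σ ⁻¹' {z} ∩ U ⊆ {y} := by
    intro y _
    obtain ⟨e, hy', he⟩ := hσ y
    refine ⟨e.source, e.open_source, hy', ?_⟩
    rintro w ⟨hw1, hw2⟩
    have hwz : σ w = z := hw1
    have hyz : σ y = z := by
      have : y ∈ σ ⁻¹' {z} := ‹y ∈ σ ⁻¹' {z}›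
      exact this
    have : e w = e y := by rw [← he]; rw [hwz, hyz]
    exact e.injOn hw2 hy' this
  choose! U hUo hUy hUsub using h
  obtain ⟨t, htmem, htcov⟩ := hK.elim_nhds_subcover U
    (fun y hy => (hUo y hy).mem_nhds (hUy y hy))
  refine Set.Finite.subset t.finite_toSet ?_
  intro w hw
  obtain ⟨y, hy, hwU⟩ := Set.mem_iUnion₂.mp (htcov hw)
  have : w = y := hUsub y (htmem y hy) ⟨hw, hwU⟩
  simpa [this] using hy

lemma local_structure {σ : X → X} (hσ : IsLocalHomeomorph σ) (x : X) :
    ∃ (s : Finset X) (τ : X → X → X) (V : Set X),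
      IsOpen V ∧ σ x ∈ V ∧ (↑s : Set X) = σ ⁻¹' {σ x} ∧
      (∀ y ∈ s, ContinuousOn (τ y) V) ∧
      (∀ z ∈ V, Set.InjOn (fun y => τ y z) ↑s) ∧
      (∀ z ∈ V, σ ⁻¹' {z} = (fun y => τ y z) '' ↑s) := by
  classical
  have hfin := fiber_finite_aux hσ (σ x)
  set s : Finset X := hfin.toFinset with hsdef
  have hs : (↑s : Set X) = σ ⁻¹' {σ x} := hfin.coe_toFinset
  obtain ⟨W, hW, hWdisj⟩ := hfin.t2_separation
  have hσcont := hσ.continuous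
  have hσopen := hσ.isOpenMap
  choose e hemem heq using hσ
  set U : X → Set X := fun y => (e y).source ∩ W y with hUdef
  have hUo : ∀ y, IsOpen (U y) := fun y => (e y).open_source.inter (hW y).2
  have hUy : ∀ y, y ∈ U y := fun y => ⟨hemem y, (hW y).1⟩
  set D : Set X := σ '' (⋃ y ∈ s, U y)ᶜ with hDdef
  have hDclosed : IsClosed D := by
    have hcpt : IsCompact ((⋃ y ∈ s, U y)ᶜ) :=
      (isClosed_compl_iff.mpr (isOpen_biUnion fun y _ => hUo y)).isCompact
    exact (hcpt.image hσcont).isClosed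
  set V : Set X := (⋂ y ∈ s, σ '' U y) ∩ Dᶜ with hVdef
  have hVo : IsOpen V := by
    refine IsOpen.inter ?_ hDclosed.isOpen_compl
    exact isOpen_biInter_finset fun y _ => hσopen _ (hUo y)
  have hxV : σ x ∈ V := by
    constructor
    · refine Set.mem_iInter₂.mpr fun y hy => ?_
      have : σ y = σ x := by
        have : y ∈ σ ⁻¹' {σ x} := hs ▸ Finset.mem_coe.mpr hy
        exact this
      exact ⟨y, hUy y, this⟩
    · intro hmem
      obtain ⟨w, hw, hwz⟩ := hmem
      have : w ∈ σ ⁻¹' {σ x} := hwz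
      have hws : w ∈ s := by rw [← Finset.mem_coe, hs]; exact this
      exact hw (Set.mem_biUnion hws (hUy w))
  -- key: for z ∈ V and y ∈ s, e y |>.symm z lands in U y with σ-value z
  have hkey : ∀ z ∈ V, ∀ y ∈ s, (e y).symm z ∈ U y ∧ σ ((e y).symm z) = z := by
    intro z hz y hy
    have hz1 : z ∈ σ '' U y := Set.mem_iInter₂.mp hz.1 y hy
    obtain ⟨u, hu, huz⟩ := hz1
    have husrc : u ∈ (e y).source := hu.1
    have : (e y).symm z = u := by
      rw [← huz, heq y]; exact (e y).left_inv husrc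
    refine ⟨this ▸ hu, by rw [this, huz]⟩
  refine ⟨s, fun y => (e y).symm, V, hVo, hxV, hs, ?_, ?_, ?_⟩
  · intro y hy
    have hVsub : V ⊆ (e y).target := by
      intro z hz
      have hz1 : z ∈ σ '' U y := Set.mem_iInter₂.mp hz.1 y hy
      obtain ⟨u, hu, huz⟩ := hz1
      rw [← huz, heq y]
      exact (e y).map_source hu.1
    exact (e y).continuousOn_symm.mono hVsub
  · intro z hz y hy y' hy' hee
    by_contra hne
    have h1 : (e y).symm z ∈ W y := ((hkey z hz y hy).1).2
    have h2 : (e y').symm z ∈ W y' := ((hkey z hz y' hy').1).2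
    have hee' : (e y).symm z = (e y').symm z := hee
    rw [← hee'] at h2
    have hyf : y ∈ σ ⁻¹' {σ x} := hs ▸ hy
    have hy'f : y' ∈ σ ⁻¹' {σ x} := hs ▸ hy'
    have := hWdisj hyf hy'f hne
    exact this.le_bot ⟨h1, h2⟩
  · intro z hz
    apply Set.eq_of_subset_of_subset
    · intro w hw
      have hwz : σ w = z := hw
      have hwU : w ∈ ⋃ y ∈ s, U y := by
        by_contra hwc
        exact hz.2 ⟨w, hwc, hwz⟩
      obtain ⟨y, hy, hwUy⟩ := Set.mem_iUnion₂.mp hwU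
      refine ⟨y, hy, ?_⟩
      show (e y).symm z = w
      rw [← hwz, heq y]
      exact (e y).left_inv hwUy.1
    · rintro _ ⟨y, hy, rfl⟩
      exact (hkey z hz y (Finset.mem_coe.mp hy)).2

lemma condExp_eq_on_nhds {σ : X → X} (hσ : IsLocalHomeomorph σ) (f : X → ℂ) (x : X) :
    ∃ (s : Finset X) (τ : X → X → X) (V : Set X),
      IsOpen V ∧ σ x ∈ V ∧ (∀ y ∈ s, ContinuousOn (τ y) V) ∧
      ∀ x' ∈ σ ⁻¹' V, condExp σ f x' = ((s.card : ℂ))⁻¹ * ∑ y ∈ s, f (τ y (σ x')) := by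
  classical
  obtain ⟨s, τ, V, hVo, hxV, hs, hτc, hinj, hfib⟩ := local_structure hσ x
  refine ⟨s, τ, V, hVo, hxV, hτc, ?_⟩
  intro x' hx'
  have hz : σ x' ∈ V := hx'
  have hinj' : Set.InjOn (fun y => τ y (σ x')) ↑s := hinj _ hz
  have h1 : σ ⁻¹' {σ x'} = ↑(s.image (fun y => τ y (σ x'))) := by
    rw [Finset.coe_image]; exact hfib _ hz
  rw [condExp, h1, finsum_mem_coe_finset,
    Finset.sum_image (fun a ha b hb hab => hinj' ha hb hab),
    Set.ncard_coe_finset, Finset.card_image_of_injOn hinj']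

lemma condExp_continuous {σ : X → X} (hσ : IsLocalHomeomorph σ) {f : X → ℂ}
    (hf : Continuous f) : Continuous (condExp σ f) := by
  rw [continuous_iff_continuousAt]
  intro x
  obtain ⟨s, τ, V, hVo, hxV, hτc, heq⟩ := condExp_eq_on_nhds hσ f x
  have hmem : (σ ⁻¹' V) ∈ nhds x := (hVo.preimage hσ.continuous).mem_nhds hxV
  have hg : ContinuousAt (fun x' => ((s.card : ℂ))⁻¹ * ∑ y ∈ s, f (τ y (σ x'))) x := by
    refine ContinuousAt.mul continuousAt_const ?_
    refine tendsto_finset_sum _ fun y hy => ?_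
    exact hf.continuousAt.comp
      (((hτc y hy).continuousAt (hVo.mem_nhds hxV)).comp hσ.continuous.continuousAt)
  exact hg.congr (Filter.eventuallyEq_of_mem hmem heq).symm

end Aux

/-- For a surjective local homeomorphism `σ` of a compact Hausdorff space `X`,
the map `P = condExp σ` is a conditional expectation of `C(X)` onto the range of
the endomorphism `α(g) = g ∘ σ`: (i) it preserves continuity; (ii) it is
idempotent; (iii) it is a bimodule map over the range of `α`; (iv) its values
lie in the range of `α`. -/
theorem condExp_is_conditional_expectation {X : Type*} [TopologicalSpace X]
    [CompactSpace X] [T2Space X] (σ : X → X) (hσ : IsLocalHomeomorph σ)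
    (hsurj : Function.Surjective σ) :
    (∀ f : X → ℂ, Continuous f → Continuous (condExp σ f)) ∧
    (∀ f : X → ℂ, Continuous f → condExp σ (condExp σ f) = condExp σ f) ∧
    (∀ f g : X → ℂ, Continuous f → Continuous g →
      (condExp σ (fun x => g (σ x) * f x) = fun x => g (σ x) * condExp σ f x) ∧
      (condExp σ (fun x => f x * g (σ x)) = fun x => condExp σ f x * g (σ x))) ∧
    (∀ f : X → ℂ, Continuous f → ∃ g : X → ℂ, Continuous g ∧
      condExp σ f = fun x => g (σ x)) := by
  classical
  have hfin : ∀ z : X, (σ ⁻¹' {z}).Finite := fiber_finite_aux hσ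
  -- basic formula via finsets
  have hform : ∀ (f : X → ℂ) (x : X),
      condExp σ f x = (((hfin (σ x)).toFinset.card : ℂ))⁻¹ *
        ∑ y ∈ (hfin (σ x)).toFinset, f y := by
    intro f x
    have h1 : σ ⁻¹' {σ x} = ↑(hfin (σ x)).toFinset := ((hfin (σ x)).coe_toFinset).symm
    conv_lhs => rw [condExp, h1]
    rw [finsum_mem_coe_finset, Set.ncard_coe_finset]
  have hcard_ne : ∀ x : X, ((hfin (σ x)).toFinset.card : ℂ) ≠ 0 := by
    intro x
    have hx : x ∈ (hfin (σ x)).toFinset := by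
      rw [Set.Finite.mem_toFinset]; exact rfl
    simpa using Finset.card_ne_zero_of_mem hx
  have hmemσ : ∀ x : X, ∀ y ∈ (hfin (σ x)).toFinset, σ y = σ x := by
    intro x y hy
    rwa [Set.Finite.mem_toFinset] at hy
  have hconst : ∀ (f : X → ℂ) (x y : X), σ y = σ x → condExp σ f y = condExp σ f x := by
    intro f x y h
    unfold condExp
    rw [h]
  refine ⟨fun f hf => condExp_continuous hσ hf, ?_, ?_, ?_⟩
  · -- idempotent
    intro f _
    funext x
    rw [hform (condExp σ f) x]
    have : ∀ y ∈ (hfin (σ x)).toFinset, condExp σ f y = condExp σ f x :=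
      fun y hy => hconst f x y (hmemσ x y hy)
    rw [Finset.sum_congr rfl this, Finset.sum_const, nsmul_eq_mul,
      inv_mul_cancel_left₀ (hcard_ne x)]
  · -- bimodule property
    intro f g _ _
    have hleft : condExp σ (fun x => g (σ x) * f x) = fun x => g (σ x) * condExp σ f x := by
      funext x
      rw [hform _ x, hform f x]
      have : ∀ y ∈ (hfin (σ x)).toFinset, g (σ y) * f y = g (σ x) * f y := by
        intro y hy; rw [hmemσ x y hy]
      rw [Finset.sum_congr rfl this, ← Finset.mul_sum]
      ring
    refine ⟨hleft, ?_⟩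
    funext x
    have := congrFun hleft x
    calc condExp σ (fun x => f x * g (σ x)) x
        = condExp σ (fun x => g (σ x) * f x) x := by
          congr 1; funext y; ring
      _ = g (σ x) * condExp σ f x := this
      _ = condExp σ f x * g (σ x) := by ring
  · -- range of α
    intro f hf
    refine ⟨fun z => ((σ ⁻¹' {z}).ncard : ℂ)⁻¹ * ∑ᶠ y ∈ σ ⁻¹' {z}, f y, ?_, rfl⟩
    have hq := hσ.isOpenMap.isQuotientMap hσ.continuous hsurj
    rw [hq.continuous_iff]
    exact condExp_continuous hσ hf
end

section
/- Let X = {x : ℕ × ℕ → ZMod 2 | ∀ i j, x(i+1,j) + x(i,j) + x(i,j+1) = 0} be the Ledrappier subshift, and let σ₁ : X → X be the horizontal shift, (σ₁ x)(i,j) = x(i+1,j) (which maps X into X). Then for every y ∈ X and every a ∈ ZMod 2 there exists a unique z ∈ X such that σ₁(z) = y and z(0,0) = a. In particular σ₁ : X → X is surjective, and σ₁ is injective on {z ∈ X : z(0,0) = a} for each a. -/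
private def ledF (y : ℕ × ℕ → ZMod 2) (a : ZMod 2) : ℕ → ZMod 2
  | 0 => a
  | j + 1 => y (0, j) + ledF y a j

/-- In the Ledrappier subshift
`X = {x : ℕ × ℕ → ZMod 2 | ∀ i j, x(i+1,j) + x(i,j) + x(i,j+1) = 0}`,
for every `y ∈ X` and every `a ∈ ZMod 2` there is a unique `z ∈ X` with
horizontal shift `σ₁ z = y` (i.e. `z(i+1,j) = y(i,j)` for all `i,j`) and
`z(0,0) = a`. -/
theorem ledrappier_shift_unique_lift (y : ℕ × ℕ → ZMod 2)
    (hy : ∀ i j : ℕ, y (i + 1, j) + y (i, j) + y (i, j + 1) = 0) (a : ZMod 2) :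
    ∃! z : ℕ × ℕ → ZMod 2,
      (∀ i j : ℕ, z (i + 1, j) + z (i, j) + z (i, j + 1) = 0) ∧
      (∀ i j : ℕ, z (i + 1, j) = y (i, j)) ∧ z (0, 0) = a := by
  refine ⟨fun p => match p with
    | (0, j) => ledF y a j
    | (i + 1, j) => y (i, j), ⟨?_, ?_, rfl⟩, ?_⟩
  · intro i j
    cases i with
    | zero =>
      show y (0, j) + ledF y a j + ledF y a (j + 1) = 0
      rw [ledF]
      have h2 : (2 : ZMod 2) = 0 := rfl
      linear_combination (y (0, j) + ledF y a j) * h2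
    | succ k => exact hy k j
  · intro i j; rfl
  · rintro z ⟨hz, hshift, hz0⟩
    funext p
    obtain ⟨i, j⟩ := p
    cases i with
    | zero =>
      show z (0, j) = ledF y a j
      induction j with
      | zero => exact hz0
      | succ k ih =>
        have h := hz 0 k
        rw [hshift 0 k, ih] at h
        have h2 : z (0, k + 1) = y (0, k) + ledF y a k := by
          have h2 : (2 : ZMod 2) = 0 := rfl
          linear_combination h - (ledF y a k + y (0, k)) * h2
        rw [h2, ledF]
    | succ k => exact hshift k j
end

section
/- Let X = {x : ℕ × ℕ → ZMod 2 | ∀ i j, x(i+1,j) + x(i,j) + x(i,j+1) = 0} be the Ledrappier subshift, equipped with the subspace topology from the product topology on ℕ × ℕ → ZMod 2 (ZMod 2 discrete). Then the horizontal shift σ₁ : X → X, (σ₁ x)(i,j) = x(i+1,j), and the vertical shift σ₂ : X → X, (σ₂ x)(i,j) = x(i,j+1), are both local homeomorphisms. -/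
/-- The Ledrappier subshift: configurations `x : ℕ × ℕ → ZMod 2` with
`x(i+1,j) + x(i,j) + x(i,j+1) = 0` for all `i, j`. -/
def Ledrappier : Set ((ℕ × ℕ) → ZMod 2) :=
  {x | ∀ i j : ℕ, x (i + 1, j) + x (i, j) + x (i, j + 1) = 0}

/-- The horizontal shift on the Ledrappier subshift. -/
def ledShiftH (x : Ledrappier) : Ledrappier :=
  ⟨fun p => x.1 (p.1 + 1, p.2), fun i j => x.2 (i + 1) j⟩

/-- The vertical shift on the Ledrappier subshift. -/
def ledShiftV (x : Ledrappier) : Ledrappier :=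
  ⟨fun p => x.1 (p.1, p.2 + 1), fun i j => x.2 i (j + 1)⟩

/-! Row 0 of a configuration is determined by its corner entry `x (0, 0)` and row 1, through
`x (0, j + 1) = x (0, j) + x (1, j)`; hence `x ↦ (x (0, 0), ledShiftH x)` is a homeomorphism
`Ledrappier ≃ₜ ZMod 2 × Ledrappier`, and `ledShiftH` is a trivial two-sheeted covering. The
defining relation is symmetric in the two coordinates, so transposition is a homeomorphism of
`Ledrappier` conjugating `ledShiftH` to `ledShiftV`. -/

theorem isLocalHomeomorph_snd {D Y : Type*} [TopologicalSpace D] [DiscreteTopology D]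
    [TopologicalSpace Y] : IsLocalHomeomorph (Prod.snd : D × Y → Y) := fun p =>
  ⟨{ toFun := Prod.snd
     invFun := fun y => (p.1, y)
     source := Prod.fst ⁻¹' {p.1}
     target := Set.univ
     map_source' := fun _ _ => trivial
     map_target' := fun _ _ => rfl
     left_inv' := fun _ hq => Prod.ext hq.symm rfl
     right_inv' := fun _ _ => rfl
     open_source := continuous_fst.isOpen_preimage _ (isOpen_discrete _)
     open_target := isOpen_univ
     continuousOn_toFun := continuous_snd.continuousOn
     continuousOn_invFun := (continuous_const.prodMk continuous_id).continuousOn },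
    rfl, rfl⟩

namespace Ledrappier

theorem comp_swap_mem {x : ℕ × ℕ → ZMod 2} (hx : x ∈ Ledrappier) :
    x ∘ Prod.swap ∈ Ledrappier := fun i j =>
  (by linear_combination hx j i : x (j, i + 1) + x (j, i) + x (j + 1, i) = 0)

def transpose : Ledrappier ≃ₜ Ledrappier where
  toFun x := ⟨x.1 ∘ Prod.swap, comp_swap_mem x.2⟩
  invFun x := ⟨x.1 ∘ Prod.swap, comp_swap_mem x.2⟩
  left_inv _ := rfl
  right_inv _ := rfl
  continuous_toFun := ((Pi.continuous_precomp _).comp continuous_subtype_val).subtype_mk _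
  continuous_invFun := ((Pi.continuous_precomp _).comp continuous_subtype_val).subtype_mk _

theorem ledShiftV_eq : ledShiftV = transpose ∘ ledShiftH ∘ transpose := rfl

def rowBelow (c : ZMod 2) (y : ℕ × ℕ → ZMod 2) : ℕ → ZMod 2
  | 0 => c
  | j + 1 => rowBelow c y j + y (0, j)

def extendBelow (c : ZMod 2) (y : ℕ × ℕ → ZMod 2) : ℕ × ℕ → ZMod 2
  | (0, j) => rowBelow c y j
  | (i + 1, j) => y (i, j)

theorem extendBelow_mem (c : ZMod 2) {y : ℕ × ℕ → ZMod 2} (hy : y ∈ Ledrappier) :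
    extendBelow c y ∈ Ledrappier
  | 0, j => show y (0, j) + rowBelow c y j + (rowBelow c y j + y (0, j)) = 0 by grind
  | i + 1, j => hy i j

theorem continuous_rowBelow (j : ℕ) :
    Continuous fun p : ZMod 2 × (ℕ × ℕ → ZMod 2) => rowBelow p.1 p.2 j := by
  induction j with
  | zero => exact continuous_fst
  | succ j ih => exact ih.add ((continuous_apply (0, j)).comp continuous_snd)

theorem continuous_extendBelow :
    Continuous fun p : ZMod 2 × (ℕ × ℕ → ZMod 2) => extendBelow p.1 p.2 :=
  continuous_pi fun
    | (0, j) => continuous_rowBelow j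
    | (i + 1, j) => (continuous_apply (i, j)).comp continuous_snd

theorem rowBelow_eq {x : ℕ × ℕ → ZMod 2} (hx : x ∈ Ledrappier) (j : ℕ) :
    rowBelow (x (0, 0)) (fun p => x (p.1 + 1, p.2)) j = x (0, j) := by
  induction j with
  | zero => rfl
  | succ j ih =>
    have := hx 0 j
    simp only [rowBelow, ih]
    grind

theorem extendBelow_eq {x : ℕ × ℕ → ZMod 2} (hx : x ∈ Ledrappier) :
    extendBelow (x (0, 0)) (fun p => x (p.1 + 1, p.2)) = x := by
  funext p
  rcases p with ⟨_ | i, j⟩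
  · exact rowBelow_eq hx j
  · rfl

theorem continuous_ledShiftH : Continuous ledShiftH :=
  ((Pi.continuous_precomp fun p : ℕ × ℕ => (p.1 + 1, p.2)).comp
    continuous_subtype_val).subtype_mk _

def splitShiftH : Ledrappier ≃ₜ ZMod 2 × Ledrappier where
  toFun x := (x.1 (0, 0), ledShiftH x)
  invFun p := ⟨extendBelow p.1 p.2.1, extendBelow_mem p.1 p.2.2⟩
  left_inv x := Subtype.ext (extendBelow_eq x.2)
  right_inv _ := rfl
  continuous_toFun :=
    ((continuous_apply (0, 0)).comp continuous_subtype_val).prodMk continuous_ledShiftH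
  continuous_invFun :=
    (continuous_extendBelow.comp (continuous_fst.prodMk
      (continuous_subtype_val.comp continuous_snd))).subtype_mk _

end Ledrappier

/-- The horizontal and vertical shifts of the Ledrappier subshift (with the
subspace topology from the product topology, `ZMod 2` discrete) are local
homeomorphisms. -/
theorem ledrappier_shifts_isLocalHomeomorph :
    IsLocalHomeomorph ledShiftH ∧ IsLocalHomeomorph ledShiftV := by
  have hH : IsLocalHomeomorph ledShiftH :=
    isLocalHomeomorph_snd.comp Ledrappier.splitShiftH.isLocalHomeomorph
  refine ⟨hH, ?_⟩
  rw [Ledrappier.ledShiftV_eq]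
  exact Ledrappier.transpose.isLocalHomeomorph.comp
    (hH.comp Ledrappier.transpose.isLocalHomeomorph)
end

section
/- Let Y = ℕ → [0,1] with the product topology and let σ : Y → Y be the shift σ(x)(n) = x(n+1). Then σ is continuous, open, and surjective, but σ is NOT a local homeomorphism. -/
noncomputable def shiftSplit : (ℕ → unitInterval) ≃ₜ unitInterval × (ℕ → unitInterval) where
  toFun x := (x 0, fun n => x (n + 1))
  invFun p n := Nat.casesOn n p.1 (fun m => p.2 m)
  left_inv x := by funext n; cases n <;> rfl
  right_inv p := rfl
  continuous_toFun := by
    exact (continuous_apply 0).prodMk (continuous_pi fun n => continuous_apply (n + 1))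
  continuous_invFun := by
    apply continuous_pi
    intro n
    cases n with
    | zero => exact continuous_fst
    | succ m => exact (continuous_apply m).comp continuous_snd

/-- The one-sided shift `σ(x)(n) = x(n+1)` on `Y = ℕ → [0,1]` (product topology)
is continuous, open and surjective, but not a local homeomorphism. -/
theorem interval_shift_not_localHomeo :
    Continuous (fun (x : ℕ → unitInterval) (n : ℕ) => x (n + 1)) ∧
    IsOpenMap (fun (x : ℕ → unitInterval) (n : ℕ) => x (n + 1)) ∧
    Function.Surjective (fun (x : ℕ → unitInterval) (n : ℕ) => x (n + 1)) ∧
    ¬ IsLocalHomeomorph (fun (x : ℕ → unitInterval) (n : ℕ) => x (n + 1)) := by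
  refine ⟨continuous_pi fun n => continuous_apply (n + 1), ?_, ?_, ?_⟩
  · have : (fun (x : ℕ → unitInterval) (n : ℕ) => x (n + 1)) =
        Prod.snd ∘ shiftSplit := rfl
    rw [this]
    exact isOpenMap_snd.comp shiftSplit.isOpenMap
  · intro y
    exact ⟨fun n => Nat.casesOn n 0 (fun m => y m), rfl⟩
  · intro h
    set σ := fun (x : ℕ → unitInterval) (n : ℕ) => x (n + 1) with hσ
    set x : ℕ → unitInterval := fun _ => 0 with hx
    obtain ⟨e, hxe, he⟩ := h x
    set f : unitInterval → (ℕ → unitInterval) := fun c => Function.update x 0 c with hf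
    have hfc : Continuous f := continuous_const.update 0 continuous_id
    have hσf : ∀ c, σ (f c) = σ x := by
      intro c; funext n
      simp [hσ, hf, Function.update_of_ne (Nat.succ_ne_zero n)]
    have hfx : f 0 = x := by
      funext n; cases n <;> simp [hf, hx]
    have hV : IsOpen (f ⁻¹' e.source) := e.open_source.preimage hfc
    have hV0 : (0 : unitInterval) ∈ f ⁻¹' e.source := by
      simpa [hfx] using hxe
    have hsub : f ⁻¹' e.source ⊆ {0} := by
      intro c hc
      have h1 : e (f c) = e (f 0) := by
        rw [← he]
        rw [hσf c, hfx]
      have h2 : f c = f 0 := e.injOn hc (by simpa [hfx] using hxe) h1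
      have := congrFun h2 0
      simpa [hf] using this
    have hVeq : f ⁻¹' e.source = {0} := subset_antisymm hsub (by intro c hc; simpa using hc ▸ hV0)
    have hopen : IsOpen ({0} : Set unitInterval) := hVeq ▸ hV
    have hclopen : IsClopen ({0} : Set unitInterval) := ⟨isClosed_singleton, hopen⟩
    rcases isClopen_iff.mp hclopen with h0 | h1
    · exact (Set.singleton_ne_empty _) h0
    · have : (1 : unitInterval) ∈ ({0} : Set unitInterval) := h1 ▸ Set.mem_univ _
      have : (1 : unitInterval) = 0 := this
      have h01 : ((1:unitInterval):ℝ) = ((0:unitInterval):ℝ) := congrArg Subtype.val this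
      norm_num at h01
end

section
/- Let Y = ℕ → [0,1] with the product topology and let σ : Y → Y be the shift σ(x)(n) = x(n+1). Let R₁ = {(x,y) ∈ Y × Y : σ(x) = σ(y)} and R₂ = {(x,y) ∈ Y × Y : σ(σ(x)) = σ(σ(y))}, so R₁ ⊆ R₂. Then R₁ is NOT an open subset of R₂ when R₂ carries the subspace topology from Y × Y. -/
/-!
Fix a path `γ` from `a` to `b ≠ a` and move only the `k`-th coordinate of the constant sequence
`a` along it. Paired with the constant sequence, this gives a path in `R_{k+1}` that starts in
`R_k` and leaves it. Since `R_k` is also closed in `R_{k+1}`, it would be clopen, and a connected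
path cannot leave a clopen set it meets.
-/

open Function Set

variable {α : Type*} [TopologicalSpace α]

lemma isClosed_setOf_shift_eq [T2Space α] (k m : ℕ) :
    IsClosed {p : {q : (ℕ → α) × (ℕ → α) // (fun n => q.1 (n + m)) = fun n => q.2 (n + m)} |
      (fun n => p.val.1 (n + k)) = fun n => p.val.2 (n + k)} :=
  isClosed_eq (by fun_prop) (by fun_prop)

def Path.shiftPair {a b : α} (γ : Path a b) (k : ℕ) (t : unitInterval) :
    {q : (ℕ → α) × (ℕ → α) // (fun n => q.1 (n + (k + 1))) = fun n => q.2 (n + (k + 1))} :=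
  ⟨(fun _ => a, update (fun _ => a) k (γ t)), by
    funext n
    exact (update_of_ne (by omega) _ _).symm⟩

lemma Path.continuous_shiftPair {a b : α} (γ : Path a b) (k : ℕ) :
    Continuous (γ.shiftPair k) :=
  (continuous_const.prodMk (continuous_const.update k γ.continuous)).subtype_mk _

lemma Path.shiftPair_shift_eq_iff {a b : α} (γ : Path a b) (k : ℕ) (t : unitInterval) :
    ((fun n => (γ.shiftPair k t).val.1 (n + k)) = fun n => (γ.shiftPair k t).val.2 (n + k)) ↔
      γ t = a := by
  constructor
  · intro h
    simpa [shiftPair] using (congrFun h 0).symm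
  · intro h
    funext n
    simp [shiftPair, h]

theorem not_isOpen_setOf_shift_eq [T2Space α] {a b : α} (γ : Path a b) (hab : a ≠ b) (k : ℕ) :
    ¬ IsOpen {p : {q : (ℕ → α) × (ℕ → α) //
        (fun n => q.1 (n + (k + 1))) = fun n => q.2 (n + (k + 1))} |
      (fun n => p.val.1 (n + k)) = fun n => p.val.2 (n + k)} := by
  intro hopen
  have hclopen := (⟨isClosed_setOf_shift_eq k (k + 1), hopen⟩ : IsClopen _)
  have hsub := (isPreconnected_range (γ.continuous_shiftPair k)).subset_isClopen hclopen
    ⟨γ.shiftPair k 0, mem_range_self 0, (γ.shiftPair_shift_eq_iff k 0).2 γ.source⟩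
  have hγ1 : γ 1 = a := (γ.shiftPair_shift_eq_iff k 1).1 (hsub (mem_range_self 1))
  exact hab (γ.target ▸ hγ1).symm

/-- For the one-sided shift `σ(x)(n) = x(n+1)` on `Y = ℕ → [0,1]`, the set
`R₁ = {(x,y) | σ x = σ y}` is NOT open in `R₂ = {(x,y) | σ² x = σ² y}` with the
subspace topology from `Y × Y`. -/
theorem R1_not_open_in_R2 :
    ¬ IsOpen {p : {q : (ℕ → unitInterval) × (ℕ → unitInterval) //
        (fun n => q.1 (n + 2)) = (fun n => q.2 (n + 2))} |
      (fun n => p.val.1 (n + 1)) = (fun n => p.val.2 (n + 1))} :=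
  not_isOpen_setOf_shift_eq Path.id zero_ne_one 1
end

section
/- Let A be a unital C*-algebra, let α₁ : A → A be a unital injective *-homomorphism, and let P₁, P₂ : A → A be linear maps such that P₁(α₁(a) · x · α₁(b)) = α₁(a) · P₁(x) · α₁(b) for all a, b, x ∈ A, and P₂ ∘ α₁ = α₁ ∘ P₂. Then for all ξ₁, η₁, ξ₂, η₂, b ∈ A with α₁(b) = P₁(ξ₁* · η₁), one has P₂(P₁((ξ₁ · α₁(ξ₂))* · (η₁ · α₁(η₂)))) = α₁(P₂(ξ₂* · b · η₂)). -/
/-- Let `A` be a unital C*-algebra, `α₁ : A → A` a unital injective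
*-homomorphism, and `P₁, P₂ : A → A` linear maps such that `P₁` is an
`α₁(A)`-bimodule map and `P₂` commutes with `α₁`. Then for all
`ξ₁, η₁, ξ₂, η₂, b ∈ A` with `α₁ b = P₁ (ξ₁* η₁)`, one has
`P₂ (P₁ ((ξ₁ α₁(ξ₂))* (η₁ α₁(η₂)))) = α₁ (P₂ (ξ₂* b η₂))`.
This is the inner-product computation behind the isomorphism
`A(α₁,P₁) ⊗_A A(α₂,P₂) ≅ A(α₁∘α₂, P₁∘P₂)`. -/
theorem bimodule_inner_product_identity {A : Type*} [NormedRing A] [StarRing A]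
    [CStarRing A] [CompleteSpace A] [NormedAlgebra ℂ A] [StarModule ℂ A]
    (α₁ : A →⋆ₐ[ℂ] A) (hinj : Function.Injective α₁)
    (P₁ P₂ : A →ₗ[ℂ] A)
    (hP₁ : ∀ a b x : A, P₁ (α₁ a * x * α₁ b) = α₁ a * P₁ x * α₁ b)
    (hP₂ : ∀ x : A, P₂ (α₁ x) = α₁ (P₂ x))
    (ξ₁ η₁ ξ₂ η₂ b : A) (hb : α₁ b = P₁ (star ξ₁ * η₁)) :
    P₂ (P₁ (star (ξ₁ * α₁ ξ₂) * (η₁ * α₁ η₂))) = α₁ (P₂ (star ξ₂ * b * η₂)) := by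
  have key : star (ξ₁ * α₁ ξ₂) * (η₁ * α₁ η₂)
      = α₁ (star ξ₂) * (star ξ₁ * η₁) * α₁ η₂ := by
    rw [star_mul, ← map_star]
    noncomm_ring
  rw [key, hP₁, ← hb, ← map_mul, ← map_mul, hP₂]
end
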